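/- If H is an α-acyclic linear hypergraph and Δ, k are integers with Δ(H) ≤ Δ and r(H) ≤ k, then χ_I(H) ≤ Δ + k − 1. -/

import Mathlib

structure FinHypergraph (V : Type*) where
  verts : Finset V
  edges : Finset (Finset V)
  edge_sub : ∀ s ∈ edges, s ⊆ verts
  edge_nonempty : ∀ s ∈ edges, s.Nonempty

namespace FinHypergraph

variable {V : Type*} [DecidableEq V]

/-- The degree of a vertex: the number of edges containing it. -/
def degree (H : FinHypergraph V) (x : V) : ℕ :=
  (H.edges.filter fun s => x ∈ s).card

/-- Δ(H): the maximum degree. -/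
def maxDegree (H : FinHypergraph V) : ℕ :=
  H.verts.sup H.degree

/-- r(H): the maximum cardinality of an edge. -/
def rank (H : FinHypergraph V) : ℕ :=
  H.edges.sup Finset.card

/-- An incidence of H: a pair (x, s) with s an edge and x ∈ s. -/
def IsIncidence (H : FinHypergraph V) (p : V × Finset V) : Prop :=
  p.2 ∈ H.edges ∧ p.1 ∈ p.2

/-- Two (distinct) incidences (x,s), (x',s') are adjacent if x = x', or {x,x'} ⊆ s,
or {x,x'} ⊆ s'. -/
def IncAdj (p q : V × Finset V) : Prop :=
  p ≠ q ∧ (p.1 = q.1 ∨ ({p.1, q.1} : Finset V) ⊆ p.2 ∨ ({p.1, q.1} : Finset V) ⊆ q.2)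

/-- A proper incidence k-coloring: adjacent incidences get distinct colors from {0, ..., k-1}. -/
def HasIncidenceColoring (H : FinHypergraph V) (k : ℕ) : Prop :=
  ∃ φ : V × Finset V → ℕ,
    (∀ p, H.IsIncidence p → φ p < k) ∧
    (∀ p q, H.IsIncidence p → H.IsIncidence q → IncAdj p q → φ p ≠ φ q)

/-- χ_I(H): the incidence chromatic number. -/
noncomputable def incChromaticNumber (H : FinHypergraph V) : ℕ :=
  sInf {k | H.HasIncidenceColoring k}

/-- H is t-quasi-linear: two distinct edges meet in at most t vertices, and two
distinct vertices lie in at most t common edges. -/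
def QuasiLinear (H : FinHypergraph V) (t : ℕ) : Prop :=
  (∀ s ∈ H.edges, ∀ s' ∈ H.edges, s ≠ s' → (s ∩ s').card ≤ t) ∧
  (∀ x ∈ H.verts, ∀ y ∈ H.verts, x ≠ y →
    (H.edges.filter fun s => x ∈ s ∧ y ∈ s).card ≤ t)

/-- H is linear: two distinct edges meet in at most one vertex. -/
def Linear (H : FinHypergraph V) : Prop :=
  ∀ s ∈ H.edges, ∀ s' ∈ H.edges, s ≠ s' → (s ∩ s').card ≤ 1

/-- The Levi graph B(H): bipartite incidence graph between vertices and edges of H. -/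
def Levi (H : FinHypergraph V) : SimpleGraph (V ⊕ Finset V) where
  Adj a b :=
    match a, b with
    | Sum.inl x, Sum.inr s => s ∈ H.edges ∧ x ∈ s
    | Sum.inr s, Sum.inl x => s ∈ H.edges ∧ x ∈ s
    | _, _ => False
  symm := ⟨by
    rintro (x | s) (y | t) h <;> exact h⟩
  loopless := ⟨by
    rintro (x | s) h <;> exact h⟩

end FinHypergraph

/-- One step of GYO-reduction on a pair (vertex set, edge set):
(i) delete a vertex contained in only one edge (together with its occurrence in edges);
(ii) delete an edge contained in another edge;
(iii) delete an edge containing no vertex. -/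
inductive GYOStep {V : Type*} [DecidableEq V] :
    Finset V × Finset (Finset V) → Finset V × Finset (Finset V) → Prop
  | delVertex (X : Finset V) (S : Finset (Finset V)) (x : V) (hx : x ∈ X)
      (h : (S.filter fun s => x ∈ s).card ≤ 1) :
      GYOStep (X, S) (X.erase x, S.image fun s => s.erase x)
  | delSubEdge (X : Finset V) (S : Finset (Finset V)) (s s' : Finset V)
      (hs : s ∈ S) (hs' : s' ∈ S) (hne : s ≠ s') (hsub : s ⊆ s') :
      GYOStep (X, S) (X, S.erase s)
  | delEmptyEdge (X : Finset V) (S : Finset (Finset V)) (h : (∅ : Finset V) ∈ S) :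
      GYOStep (X, S) (X, S.erase ∅)

/-- H is α-acyclic: GYO-reduction reduces it to the empty hypergraph. -/
def FinHypergraph.IsAlphaAcyclic {V : Type*} [DecidableEq V] (H : FinHypergraph V) : Prop :=
  Relation.ReflTransGen GYOStep (H.verts, H.edges) (∅, ∅)

namespace IncAux
open Finset
variable {V : Type*} [DecidableEq V]

def degS (S : Finset (Finset V)) (x : V) : ℕ := (S.filter fun s => x ∈ s).card

def Lin (S : Finset (Finset V)) : Prop :=
  ∀ s ∈ S, ∀ s' ∈ S, s ≠ s' → (s ∩ s').card ≤ 1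

def low (S : Finset (Finset V)) (s : Finset V) : Finset V :=
  s.filter fun y => degS S y ≤ 1

def colSet (S : Finset (Finset V)) (φ : V × Finset V → ℕ) (w : V) : Finset ℕ :=
  (S.filter fun t => w ∈ t).biUnion fun t => t.image fun y => φ (y, t)

def atSet (S : Finset (Finset V)) (φ : V × Finset V → ℕ) (w : V) : Finset ℕ :=
  (S.filter fun t => w ∈ t).image fun t => φ (w, t)

def Proper (S : Finset (Finset V)) (φ : V × Finset V → ℕ) : Prop :=
  ∀ p q : V × Finset V, p.2 ∈ S → p.1 ∈ p.2 → q.2 ∈ S → q.1 ∈ q.2 →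
    FinHypergraph.IncAdj p q → φ p ≠ φ q

lemma atSet_subset_colSet (S : Finset (Finset V)) (φ : V × Finset V → ℕ) (w : V) :
    atSet S φ w ⊆ colSet S φ w := by
  intro b hb
  obtain ⟨t, ht, rfl⟩ := mem_image.mp hb
  exact mem_biUnion.mpr ⟨t, ht, mem_image.mpr ⟨w, (mem_filter.mp ht).2, rfl⟩⟩

lemma erase_image_of_injOn {f : Finset V → Finset V} {S : Finset (Finset V)}
    (hinj : Set.InjOn f ↑S) {t : Finset V} (ht : t ∈ S) :
    (S.image f).erase (f t) = (S.erase t).image f := by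
  ext w
  simp only [mem_erase, mem_image]
  constructor
  · rintro ⟨hw, u, hu, rfl⟩
    exact ⟨u, ⟨fun h => hw (by rw [h]), hu⟩, rfl⟩
  · rintro ⟨u, ⟨hut, huS⟩, rfl⟩
    exact ⟨fun h => hut (hinj (mem_coe.mpr huS) (mem_coe.mpr ht) h), u, huS, rfl⟩

lemma reduce_verts_aux : ∀ (n : ℕ) (X : Finset V), X.card ≤ n →
    Relation.ReflTransGen GYOStep (X, (∅ : Finset (Finset V))) (∅, ∅) := by
  intro n
  induction n with
  | zero =>
    intro X h
    have : X = ∅ := card_eq_zero.mp (Nat.le_zero.mp h)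
    subst this
    exact Relation.ReflTransGen.refl
  | succ n ih =>
    intro X h
    rcases X.eq_empty_or_nonempty with rfl | ⟨x, hx⟩
    · exact Relation.ReflTransGen.refl
    · have hstep : GYOStep (X, (∅ : Finset (Finset V)))
          (X.erase x, (∅ : Finset (Finset V)).image fun s => s.erase x) :=
        GYOStep.delVertex X ∅ x hx (by simp)
      rw [image_empty] at hstep
      refine Relation.ReflTransGen.head hstep (ih _ ?_)
      have := card_erase_of_mem hx
      have := card_pos.mpr ⟨x, hx⟩
      omega

lemma reduce_verts (X : Finset V) :
    Relation.ReflTransGen GYOStep (X, (∅ : Finset (Finset V))) (∅, ∅) :=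
  reduce_verts_aux X.card X le_rfl


lemma empty_case (X : Finset V) (S : Finset (Finset V)) (hS : (∅ : Finset V) ∈ S)
    (hlin : Lin S)
    (htail : Relation.ReflTransGen GYOStep (X, S.erase ∅) (∅, ∅))
    (ih : Lin (X, S.erase ∅).2 → (X, S.erase ∅).2.Nonempty →
      ∃ s1 ∈ (X, S.erase ∅).2, ((s1.filter fun y => 2 ≤ degS (X, S.erase ∅).2 y).card ≤ 1 ∧
        Relation.ReflTransGen GYOStep
          ((X, S.erase ∅).1 \ low (X, S.erase ∅).2 s1, (X, S.erase ∅).2.erase s1) (∅, ∅))) :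
    ∃ s ∈ S, ((s.filter fun y => 2 ≤ degS S y).card ≤ 1 ∧
      Relation.ReflTransGen GYOStep (X \ low S s, S.erase s) (∅, ∅)) := by
  dsimp only at ih
  have hdegeq : ∀ y : V, degS (S.erase ∅) y = degS S y := by
    intro y
    unfold degS
    rw [filter_erase, erase_eq_of_notMem]
    intro hmem
    exact notMem_empty y (mem_filter.mp hmem).2
  by_cases h0 : (S.erase ∅).Nonempty
  · obtain ⟨s1, hs1, hp1, hc1⟩ :=
      ih (fun t ht t' ht' h => hlin t (mem_of_mem_erase ht) t' (mem_of_mem_erase ht') h) h0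
    have hs1S : s1 ∈ S := mem_of_mem_erase hs1
    have hs1ne : s1 ≠ ∅ := (mem_erase.mp hs1).1
    refine ⟨s1, hs1S, ?_, ?_⟩
    · refine le_trans (le_of_eq ?_) hp1
      congr 1
      apply filter_congr
      intro y _
      simp [hdegeq y]
    · have hlow1 : low S s1 = low (S.erase ∅) s1 := by
        unfold low
        apply filter_congr
        intro y _
        simp [hdegeq y]
      have hstep : GYOStep (X \ low S s1, S.erase s1) (X \ low S s1, (S.erase s1).erase ∅) :=
        GYOStep.delEmptyEdge _ _ (mem_erase.mpr ⟨Ne.symm hs1ne, hS⟩)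
      have hcomm : (S.erase s1).erase ∅ = (S.erase ∅).erase s1 := by
        ext u
        simp only [mem_erase]
        tauto
      refine Relation.ReflTransGen.head hstep ?_
      rw [hcomm, hlow1]
      exact hc1
  · have hS1 : S.erase ∅ = ∅ := not_nonempty_iff_eq_empty.mp h0
    refine ⟨∅, hS, by simp, ?_⟩
    have h1 : low S (∅ : Finset V) = ∅ := by simp [low]
    rw [h1, sdiff_empty, hS1]
    exact reduce_verts X

theorem pendant (a : Finset V × Finset (Finset V))
    (h : Relation.ReflTransGen GYOStep a (∅, ∅)) :
    Lin a.2 → a.2.Nonempty →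
    ∃ s ∈ a.2, ((s.filter fun y => 2 ≤ degS a.2 y).card ≤ 1 ∧
      Relation.ReflTransGen GYOStep (a.1 \ low a.2 s, a.2.erase s) (∅, ∅)) := by
  induction h using Relation.ReflTransGen.head_induction_on with
  | refl =>
    intro _ hne
    exact absurd hne (by simp)
  | head hstep htail ih =>
    intro hlin hne
    cases hstep with
    | delVertex X S x hx hdeg =>
      try dsimp only at hlin hne ih ⊢
      by_cases hinj : Set.InjOn (fun s : Finset V => s.erase x) ↑S
      · -- injective case
        have hlin' : Lin (S.image fun s => s.erase x) := by
          intro t1 h1 t2 h2 hnet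
          obtain ⟨w1, hw1, rfl⟩ := mem_image.mp h1
          obtain ⟨w2, hw2, rfl⟩ := mem_image.mp h2
          have hw12 : w1 ≠ w2 := fun h => hnet (by rw [h])
          refine le_trans (card_le_card ?_) (hlin w1 hw1 w2 hw2 hw12)
          intro y hy
          rw [mem_inter] at hy ⊢
          exact ⟨mem_of_mem_erase hy.1, mem_of_mem_erase hy.2⟩
        obtain ⟨t1, ht1, hp1, hc1⟩ := ih hlin' (hne.image _)
        obtain ⟨t, htS, htt1⟩ := mem_image.mp ht1
        have hdegtr : ∀ y : V, y ≠ x →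
            degS (S.image fun s => s.erase x) y = degS S y := by
          intro y hyx
          unfold degS
          rw [filter_image, card_image_of_injOn (hinj.mono (coe_subset.mpr (filter_subset _ _)))]
          congr 1
          apply filter_congr
          intro u _
          simp [Finset.mem_erase, hyx]
        have hpendt : (t.filter fun y => 2 ≤ degS S y).card ≤ 1 := by
          refine le_trans (card_le_card ?_) hp1
          intro y hy
          obtain ⟨hyt, hdy⟩ := mem_filter.mp hy
          have hyx : y ≠ x := by
            rintro rfl
            have h1 : degS S y ≤ 1 := hdeg
            omega
          refine mem_filter.mpr ⟨?_, ?_⟩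
          · rw [← htt1]
            exact mem_erase.mpr ⟨hyx, hyt⟩
          · rw [hdegtr y hyx]
            exact hdy
        refine ⟨t, htS, hpendt, ?_⟩
        by_cases hxt : x ∈ t
        · have hxonly : ∀ u ∈ S, x ∈ u → u = t := by
            intro u hu hxu
            exact card_le_one.mp hdeg u (mem_filter.mpr ⟨hu, hxu⟩) t (mem_filter.mpr ⟨htS, hxt⟩)
          have h2 : ((S.image fun s => s.erase x)).erase t1 = S.erase t := by
            rw [← htt1, erase_image_of_injOn hinj htS]
            have hid : ∀ u ∈ S.erase t, u.erase x = u := by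
              intro u hu
              apply erase_eq_of_notMem
              intro hxu
              exact (mem_erase.mp hu).1 (hxonly u (mem_of_mem_erase hu) hxu)
            calc (S.erase t).image (fun u => u.erase x)
                = (S.erase t).image (fun u => u) := image_congr (fun u hu => hid u hu)
              _ = S.erase t := image_id'
          have hlowt : low (S.image fun s => s.erase x) t1 = (low S t).erase x := by
            unfold low
            rw [← htt1]
            calc (t.erase x).filter (fun y => degS (S.image fun s => s.erase x) y ≤ 1)
                = (t.erase x).filter (fun y => degS S y ≤ 1) := by
                  apply filter_congr
                  intro y hy
                  rw [hdegtr y (mem_erase.mp hy).1]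
              _ = (t.filter fun y => degS S y ≤ 1).erase x := filter_erase _ _ _
          have hxlow : x ∈ low S t := mem_filter.mpr ⟨hxt, hdeg⟩
          have hXeq : (X.erase x) \ ((low S t).erase x) = X \ low S t := by
            ext y
            simp only [mem_sdiff, mem_erase]
            constructor
            · rintro ⟨⟨hyx, hyX⟩, hy2⟩
              exact ⟨hyX, fun hyl => hy2 ⟨hyx, hyl⟩⟩
            · rintro ⟨hyX, hyl⟩
              have hyx : y ≠ x := fun h => hyl (h ▸ hxlow)
              exact ⟨⟨hyx, hyX⟩, fun hcon => hyl hcon.2⟩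
          rw [hlowt, h2, hXeq] at hc1
          exact hc1
        · have htt : t1 = t := by rw [← htt1, erase_eq_of_notMem hxt]
          subst htt
          have hlowt : low (S.image fun s => s.erase x) t1 = low S t1 := by
            unfold low
            apply filter_congr
            intro y hy
            have hyx : y ≠ x := fun h => hxt (h ▸ hy)
            rw [hdegtr y hyx]
          have h2 : (S.erase t1).image (fun u => u.erase x)
              = (S.image fun u => u.erase x).erase t1 := by
            have h3 := erase_image_of_injOn hinj htS
            rw [erase_eq_of_notMem hxt] at h3
            exact h3.symm
          have hstep2 : GYOStep (X \ low S t1, S.erase t1)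
              ((X \ low S t1).erase x, (S.erase t1).image fun u => u.erase x) :=
            GYOStep.delVertex _ _ x
              (mem_sdiff.mpr ⟨hx, fun hxl => hxt (mem_filter.mp hxl).1⟩)
              (le_trans (card_le_card (filter_subset_filter _ (erase_subset _ _))) hdeg)
          have hXeq : (X \ low S t1).erase x = (X.erase x) \ low S t1 := by
            ext y
            simp only [mem_erase, mem_sdiff]
            tauto
          rw [hXeq, h2] at hstep2
          refine Relation.ReflTransGen.head hstep2 ?_
          rw [hlowt] at hc1
          exact hc1
      · -- non-injective case
        rw [Set.InjOn] at hinj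
        push_neg at hinj
        obtain ⟨u1, hu1, u2, hu2, hfeq, hne12⟩ := hinj
        rw [mem_coe] at hu1 hu2
        have hfeq' : u1.erase x = u2.erase x := hfeq
        have main : ∀ a b : Finset V, a ∈ S → b ∈ S → a.erase x = b.erase x → a ≠ b → x ∈ a →
            ∃ s ∈ S, ((s.filter fun y => 2 ≤ degS S y).card ≤ 1 ∧
              Relation.ReflTransGen GYOStep (X \ low S s, S.erase s) (∅, ∅)) := by
          clear hfeq' hfeq hu1 hu2 hne12 u1 u2
          intro u1 u2 hu1 hu2 hfeq hne12 hx1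
          have hx2 : x ∉ u2 := by
            intro hx2
            exact hne12 (card_le_one.mp hdeg u1 (mem_filter.mpr ⟨hu1, hx1⟩) u2
              (mem_filter.mpr ⟨hu2, hx2⟩))
          have hu2e : u2 = u1.erase x := by
            rw [hfeq, erase_eq_of_notMem hx2]
          have hsub21 : u2 ⊆ u1 := by
            rw [hu2e]; exact erase_subset _ _
          have hc2 : u2.card ≤ 1 := by
            have := hlin u1 hu1 u2 hu2 hne12
            rwa [inter_eq_right.mpr hsub21] at this
          refine ⟨u1, hu1, ?_, ?_⟩
          · refine le_trans (card_le_card ?_) hc2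
            intro y hy
            obtain ⟨hyu, hdy⟩ := mem_filter.mp hy
            have hyx : y ≠ x := by
              rintro rfl
              have h1 : degS S y ≤ 1 := hdeg
              omega
            rw [hu2e]
            exact mem_erase.mpr ⟨hyx, hyu⟩
          · have himg : (S.image fun s => s.erase x) = S.erase u1 := by
              ext w
              constructor
              · intro hw
                obtain ⟨u, huS, rfl⟩ := mem_image.mp hw
                by_cases hu' : u = u1
                · subst hu'
                  rw [← hu2e]
                  exact mem_erase.mpr ⟨fun h => hne12 h.symm, hu2⟩
                · have hxu : x ∉ u := fun hxu => hu' (card_le_one.mp hdeg u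
                    (mem_filter.mpr ⟨huS, hxu⟩) u1 (mem_filter.mpr ⟨hu1, hx1⟩))
                  rw [erase_eq_of_notMem hxu]
                  exact mem_erase.mpr ⟨hu', huS⟩
              · intro hw
                obtain ⟨hwne, hwS⟩ := mem_erase.mp hw
                have hxw : x ∉ w := fun hxw => hwne (card_le_one.mp hdeg w
                  (mem_filter.mpr ⟨hwS, hxw⟩) u1 (mem_filter.mpr ⟨hu1, hx1⟩))
                exact mem_image.mpr ⟨w, hwS, erase_eq_of_notMem hxw⟩
            have hlow : low S u1 = {x} := by
              ext y
              simp only [low, mem_filter, mem_singleton]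
              constructor
              · rintro ⟨hyu, hdy⟩
                by_contra hyx
                have hyu2 : y ∈ u2 := by
                  rw [hu2e]; exact mem_erase.mpr ⟨hyx, hyu⟩
                have h2 : 1 < degS S y := one_lt_card.mpr
                  ⟨u1, mem_filter.mpr ⟨hu1, hyu⟩, u2, mem_filter.mpr ⟨hu2, hyu2⟩, hne12⟩
                omega
              · rintro rfl
                exact ⟨hx1, hdeg⟩
            rw [himg] at htail
            rw [erase_eq] at htail
            rw [hlow]
            exact htail
        by_cases hx1 : x ∈ u1
        · exact main u1 u2 hu1 hu2 hfeq' hne12 hx1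
        · by_cases hx2 : x ∈ u2
          · exact main u2 u1 hu2 hu1 hfeq'.symm hne12.symm hx2
          · exfalso
            apply hne12
            rw [← erase_eq_of_notMem hx1, ← erase_eq_of_notMem hx2, hfeq']
    | delSubEdge X S s0 s' hs0 hs' hne0 hsub =>
      try dsimp only at hlin hne ih ⊢
      have hc0 : s0.card ≤ 1 := by
        have := hlin s0 hs0 s' hs' hne0
        rwa [inter_eq_left.mpr hsub] at this
      rcases s0.eq_empty_or_nonempty with rfl | hs0ne
      · exact empty_case X S hs0 hlin htail ih
      · obtain ⟨x, hxs0⟩ := hs0ne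
        have hs0x : s0 = {x} :=
          eq_singleton_iff_unique_mem.mpr ⟨hxs0, fun y hy => card_le_one.mp hc0 y hy x hxs0⟩
        refine ⟨s0, hs0, le_trans (card_le_card (filter_subset _ _)) (by rw [hs0x]; simp), ?_⟩
        have hdx : 1 < degS S x := one_lt_card.mpr
          ⟨s0, mem_filter.mpr ⟨hs0, hxs0⟩, s', mem_filter.mpr ⟨hs', hsub hxs0⟩, hne0⟩
        have hlow0 : low S s0 = ∅ := by
          rw [hs0x]
          ext y
          simp only [low, mem_filter, mem_singleton, notMem_empty, iff_false, not_and]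
          rintro rfl
          omega
        rw [hlow0, sdiff_empty]
        exact htail
    | delEmptyEdge X S h0 =>
      try dsimp only at hlin hne ih ⊢
      exact empty_case X S h0 hlin htail ih

theorem color_aux (D k : ℕ) :
    ∀ (n : ℕ) (X : Finset V) (S : Finset (Finset V)), S.card ≤ n →
    Relation.ReflTransGen GYOStep (X, S) (∅, ∅) →
    Lin S → (∀ s ∈ S, s ⊆ X) → (∀ s ∈ S, s.Nonempty) →
    (∀ s ∈ S, s.card ≤ k) → (∀ v, degS S v ≤ D) →
    ∃ φ : V × Finset V → ℕ,
      (∀ p : V × Finset V, p.2 ∈ S → p.1 ∈ p.2 → φ p < D + k - 1) ∧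
      Proper S φ ∧
      ∀ w, (colSet S φ w \ atSet S φ w).card ≤ k - 1 := by
  intro n
  induction n with
  | zero =>
    intro X S hc _ _ _ _ _ _
    have hS : S = ∅ := card_eq_zero.mp (Nat.le_zero.mp hc)
    subst hS
    exact ⟨fun _ => 0, fun p hp _ => absurd hp (notMem_empty _),
      fun p q hp _ _ _ _ => absurd hp (notMem_empty _),
      fun w => by simp [colSet, atSet]⟩
  | succ n IH =>
    intro X S hc hchain hlin hsub hEne hsize hdeg
    rcases S.eq_empty_or_nonempty with rfl | hSne
    · exact ⟨fun _ => 0, fun p hp _ => absurd hp (notMem_empty _),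
        fun p q hp _ _ _ _ => absurd hp (notMem_empty _),
        fun w => by simp [colSet, atSet]⟩
    obtain ⟨s, hsS, hpend, hcert⟩ := pendant (X, S) hchain hlin hSne
    dsimp only at hsS hpend hcert
    have hsne : s.Nonempty := hEne s hsS
    obtain ⟨v, hvs, hpriv⟩ : ∃ v ∈ s, ∀ y ∈ s, y ≠ v → degS S y ≤ 1 := by
      by_cases hb : (s.filter fun y => 2 ≤ degS S y).Nonempty
      · obtain ⟨v, hv⟩ := hb
        refine ⟨v, (mem_filter.mp hv).1, fun y hy hyv => ?_⟩
        by_contra hcon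
        push_neg at hcon
        exact hyv (card_le_one.mp hpend y (mem_filter.mpr ⟨hy, hcon⟩) v hv)
      · obtain ⟨v, hv⟩ := hsne
        refine ⟨v, hv, fun y hy _ => ?_⟩
        by_contra hcon
        push_neg at hcon
        exact hb ⟨y, mem_filter.mpr ⟨hy, hcon⟩⟩
    set S' := S.erase s with hS'
    have hf1 : ∀ u ∈ S', ∀ y ∈ u, y ∈ s → y = v := by
      intro u hu y hyu hys
      by_contra hyv
      have h1 : degS S y ≤ 1 := hpriv y hys hyv
      have h2 : 1 < degS S y := one_lt_card.mpr
        ⟨u, mem_filter.mpr ⟨mem_of_mem_erase hu, hyu⟩, s,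
          mem_filter.mpr ⟨hsS, hys⟩, (mem_erase.mp hu).1⟩
      omega
    have hsub' : ∀ u ∈ S', u ⊆ X \ low S s := by
      intro u hu y hyu
      refine mem_sdiff.mpr ⟨hsub u (mem_of_mem_erase hu) hyu, fun hyl => ?_⟩
      obtain ⟨hys, hydeg⟩ := mem_filter.mp hyl
      have h2 : 1 < degS S y := one_lt_card.mpr
        ⟨u, mem_filter.mpr ⟨mem_of_mem_erase hu, hyu⟩, s,
          mem_filter.mpr ⟨hsS, hys⟩, (mem_erase.mp hu).1⟩
      omega
    have hcard' : S'.card ≤ n := by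
      have h1 : S'.card = S.card - 1 := card_erase_of_mem hsS
      have h2 : 0 < S.card := card_pos.mpr hSne
      omega
    obtain ⟨φ', hb', hp', hI'⟩ := IH (X \ low S s) S' hcard' hcert
      (fun t ht t' ht' h => hlin t (mem_of_mem_erase ht) t' (mem_of_mem_erase ht') h)
      hsub' (fun t ht => hEne t (mem_of_mem_erase ht))
      (fun t ht => hsize t (mem_of_mem_erase ht))
      (fun w => le_trans (card_le_card (filter_subset_filter _ (erase_subset _ _))) (hdeg w))
    have hk1 : 1 ≤ k := le_trans (card_pos.mpr hsne) (hsize s hsS)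
    have hD1 : 1 ≤ D := by
      have h2 : 0 < degS S v := card_pos.mpr ⟨s, mem_filter.mpr ⟨hsS, hvs⟩⟩
      have := hdeg v
      omega
    have hdegv' : degS S' v ≤ D - 1 := by
      have h2 : degS S' v = degS S v - 1 := by
        unfold degS
        rw [hS', filter_erase, card_erase_of_mem (mem_filter.mpr ⟨hsS, hvs⟩)]
      have h3 : 0 < degS S v := card_pos.mpr ⟨s, mem_filter.mpr ⟨hsS, hvs⟩⟩
      have := hdeg v
      omega
    set A' := atSet S' φ' v with hA'
    set O := colSet S' φ' v with hO
    have hAO : A' ⊆ O := atSet_subset_colSet _ _ _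
    have hA'card : A'.card ≤ D - 1 := by
      rw [hA']
      exact le_trans card_image_le hdegv'
    have hPcard : (O \ A').card ≤ k - 1 := by
      rw [hO, hA']
      exact hI' v
    have hOcard : O.card ≤ D + k - 2 := by
      have h1 : O ⊆ A' ∪ (O \ A') := by
        intro b hb
        by_cases hbA : b ∈ A'
        · exact mem_union_left _ hbA
        · exact mem_union_right _ (mem_sdiff.mpr ⟨hb, hbA⟩)
      have := (card_le_card h1).trans (card_union_le _ _)
      omega
    have hOlt : ∀ b ∈ O, b < D + k - 1 := by
      intro b hb
      rw [hO] at hb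
      obtain ⟨t, ht, hb2⟩ := mem_biUnion.mp hb
      obtain ⟨y, hy, rfl⟩ := mem_image.mp hb2
      exact hb' (y, t) (mem_filter.mp ht).1 hy
    obtain ⟨c0, hc0⟩ : ((range (D + k - 1)) \ O).Nonempty := by
      apply card_pos.mp
      have h1 := le_card_sdiff O (range (D + k - 1))
      rw [card_range] at h1
      omega
    rw [mem_sdiff, mem_range] at hc0
    obtain ⟨hc0N, hc0O⟩ := hc0
    have hc0A : c0 ∉ A' := fun h => hc0O (hAO h)
    have hPsub : O \ A' ⊆ (range (D + k - 1)) \ insert c0 A' := by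
      intro b hb
      rw [mem_sdiff] at hb ⊢
      refine ⟨mem_range.mpr (hOlt b hb.1), fun hbi => ?_⟩
      rcases mem_insert.mp hbi with rfl | hbA
      · exact hc0O hb.1
      · exact hb.2 hbA
    obtain ⟨B, hPB, hBsub, hBcard⟩ := exists_subsuperset_card_eq (n := k - 1 - (O \ A').card + (O \ A').card) hPsub
      (Nat.le_add_left _ _)
      (by
        have h1 := le_card_sdiff (insert c0 A') (range (D + k - 1))
        rw [card_range] at h1
        have h2 := card_insert_le c0 A'
        omega)
    have hBk : B.card = k - 1 := by
      rw [hBcard]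
      omega
    have hBmem : ∀ b ∈ B, b < D + k - 1 ∧ b ≠ c0 ∧ b ∉ A' := by
      intro b hb
      have h1 := hBsub hb
      rw [mem_sdiff, mem_range] at h1
      exact ⟨h1.1, fun h => h1.2 (h ▸ mem_insert_self _ _),
        fun h => h1.2 (mem_insert_of_mem h)⟩
    have hsvc : (s.erase v).card ≤ B.card := by
      rw [hBk, card_erase_of_mem hvs]
      have := hsize s hsS
      omega
    obtain ⟨f⟩ : Nonempty ({ y // y ∈ s.erase v } ↪ { b // b ∈ B }) := by
      apply Function.Embedding.nonempty_iff_card_le.mpr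
      simpa [Fintype.card_coe] using hsvc
    set ι : V → ℕ := fun y => if h : y ∈ s.erase v then (f ⟨y, h⟩ : ℕ) else 0 with hι
    have hιB : ∀ y, y ∈ s → y ≠ v → ι y ∈ B := by
      intro y hy hyv
      have h : y ∈ s.erase v := mem_erase.mpr ⟨hyv, hy⟩
      simp only [hι, dif_pos h]
      exact (f ⟨y, h⟩).2
    have hιinj : ∀ y, y ∈ s → y ≠ v → ∀ z, z ∈ s → z ≠ v → ι y = ι z → y = z := by
      intro y hy hyv z hz hzv he
      have h1 : y ∈ s.erase v := mem_erase.mpr ⟨hyv, hy⟩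
      have h2 : z ∈ s.erase v := mem_erase.mpr ⟨hzv, hz⟩
      simp only [hι, dif_pos h1, dif_pos h2] at he
      have h3 := f.injective (Subtype.ext he)
      exact congrArg Subtype.val h3
    set φ : V × Finset V → ℕ :=
      fun p => if p.2 = s then (if p.1 = v then c0 else ι p.1) else φ' p with hφdef
    have hφs : ∀ y : V, y ≠ v → φ (y, s) = ι y := fun y hyv => by simp [hφdef, hyv]
    have hφv : φ (v, s) = c0 := by simp [hφdef]
    have hφo : ∀ p : V × Finset V, p.2 ≠ s → φ p = φ' p := fun p hp => by simp [hφdef, hp]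
    have hA'm : ∀ t, t ∈ S' → v ∈ t → φ' (v, t) ∈ A' := by
      intro t ht hvt
      rw [hA']
      exact mem_image.mpr ⟨t, mem_filter.mpr ⟨ht, hvt⟩, rfl⟩
    have hOm : ∀ t, t ∈ S' → v ∈ t → ∀ y, y ∈ t → φ' (y, t) ∈ O := by
      intro t ht hvt y hy
      rw [hO]
      exact mem_biUnion.mpr ⟨t, mem_filter.mpr ⟨ht, hvt⟩, mem_image.mpr ⟨y, hy, rfl⟩⟩
    refine ⟨φ, ?_, ?_, ?_⟩
    · intro p hp2 hp1
      by_cases hps : p.2 = s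
      · by_cases hpv : p.1 = v
        · rw [show φ p = c0 from by simp [hφdef, hps, hpv]]
          exact hc0N
        · rw [show φ p = ι p.1 from by simp [hφdef, hps, hpv]]
          exact (hBmem _ (hιB p.1 (hps ▸ hp1) hpv)).1
      · rw [hφo p hps]
        exact hb' p (mem_erase.mpr ⟨hps, hp2⟩) hp1
    · have key : ∀ p q : V × Finset V, p.2 = s → p.1 ∈ p.2 → q.2 ∈ S → q.2 ≠ s → q.1 ∈ q.2 →
          FinHypergraph.IncAdj p q → φ p ≠ φ q := by
        rintro ⟨p1, p2⟩ ⟨q1, q2⟩ hp2 hp1 hq2 hq2ne hq1 ⟨hpq, hor⟩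
        dsimp only at hp2 hp1 hq2 hq2ne hq1 hor ⊢
        have hq2' : q2 ∈ S' := mem_erase.mpr ⟨hq2ne, hq2⟩
        have hφq : φ (q1, q2) = φ' (q1, q2) := hφo (q1, q2) hq2ne
        rw [hφq]
        have hp1s : p1 ∈ s := hp2 ▸ hp1
        by_cases hpv : p1 = v
        · have hφp : φ (p1, p2) = c0 := by simp [hφdef, hp2, hpv]
          rw [hφp]
          have hvq2 : v ∈ q2 := by
            rcases hor with h | h | h
            · rw [← hpv, h]
              exact hq1
            · have hq1s : q1 ∈ s := by
                have h5 := h (by simp : q1 ∈ ({p1, q1} : Finset V))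
                rwa [hp2] at h5
              have h6 : q1 = v := hf1 q2 hq2' q1 hq1 hq1s
              rwa [← h6]
            · have h5 : p1 ∈ q2 := h (by simp)
              rwa [hpv] at h5
          intro he
          apply hc0O
          rw [he]
          exact hOm q2 hq2' hvq2 q1 hq1
        · have hφp : φ (p1, p2) = ι p1 := by simp [hφdef, hp2, hpv]
          rw [hφp]
          rcases hor with h | h | h
          · exact fun _ => hpv (h.trans (hf1 q2 hq2' q1 hq1 (h ▸ hp1s)))
          · have hq1s : q1 ∈ s := by
              have h5 := h (by simp : q1 ∈ ({p1, q1} : Finset V))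
              rwa [hp2] at h5
            have hq1v : q1 = v := hf1 q2 hq2' q1 hq1 hq1s
            intro he
            apply (hBmem _ (hιB p1 hp1s hpv)).2.2
            rw [he, hq1v]
            exact hA'm q2 hq2' (hq1v ▸ hq1)
          · exact fun _ => hpv (hf1 q2 hq2' p1 (h (by simp)) hp1s)
      intro p q hp2 hp1 hq2 hq1 hadj
      by_cases hps : p.2 = s
      · by_cases hqs : q.2 = s
        · obtain ⟨hpq, hor⟩ := hadj
          have hp1s : p.1 ∈ s := hps ▸ hp1
          have hq1s : q.1 ∈ s := hqs ▸ hq1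
          have hne1 : p.1 ≠ q.1 := by
            intro h
            exact hpq (Prod.ext_iff.mpr ⟨h, hps.trans hqs.symm⟩)
          by_cases hpv : p.1 = v
          · have hqv : q.1 ≠ v := fun h => hne1 (hpv.trans h.symm)
            rw [show φ p = c0 from by simp [hφdef, hps, hpv],
              show φ q = ι q.1 from by simp [hφdef, hqs, hqv]]
            exact fun he => (hBmem _ (hιB q.1 hq1s hqv)).2.1 he.symm
          · by_cases hqv : q.1 = v
            · rw [show φ p = ι p.1 from by simp [hφdef, hps, hpv],
                show φ q = c0 from by simp [hφdef, hqs, hqv]]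
              exact fun he => (hBmem _ (hιB p.1 hp1s hpv)).2.1 he
            · rw [show φ p = ι p.1 from by simp [hφdef, hps, hpv],
                show φ q = ι q.1 from by simp [hφdef, hqs, hqv]]
              exact fun he => hne1 (hιinj p.1 hp1s hpv q.1 hq1s hqv he)
        · exact key p q hps hp1 hq2 hqs hq1 hadj
      · by_cases hqs : q.2 = s
        · have hadj' : FinHypergraph.IncAdj q p := by
            obtain ⟨hpq, hor⟩ := hadj
            refine ⟨fun h => hpq h.symm, ?_⟩
            rcases hor with h | h | h
            · exact Or.inl h.symm
            · exact Or.inr (Or.inr (by rwa [pair_comm]))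
            · exact Or.inr (Or.inl (by rwa [pair_comm]))
          exact fun he => key q p hqs hq1 hp2 hps hp1 hadj' he.symm
        · rw [hφo p hps, hφo q hqs]
          exact hp' p q (mem_erase.mpr ⟨hps, hp2⟩) hp1 (mem_erase.mpr ⟨hqs, hq2⟩) hq1 hadj
    · intro w
      by_cases hws : w ∈ s
      · by_cases hwv : w = v
        · subst hwv
          have hfil : S.filter (fun t => w ∈ t) = insert s (S'.filter fun t => w ∈ t) := by
            rw [hS', filter_erase, insert_erase (mem_filter.mpr ⟨hsS, hvs⟩)]
          have hcol : colSet S φ w = (s.image fun y => φ (y, s)) ∪ O := by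
            rw [colSet, hfil, biUnion_insert]
            congr 1
            rw [hO, colSet]
            apply biUnion_congr rfl
            intro t ht
            apply image_congr
            intro y _
            exact hφo (y, t) (mem_erase.mp (mem_filter.mp ht).1).1
          have hat : atSet S φ w = insert c0 A' := by
            rw [atSet, hfil, image_insert, hφv]
            congr 1
            rw [hA', atSet]
            apply image_congr
            intro t ht
            exact hφo (w, t) (mem_erase.mp (mem_filter.mp ht).1).1
          rw [hcol, hat]
          refine le_trans (card_le_card ?_) (le_of_eq hBk)
          intro b hb
          rw [mem_sdiff] at hb
          obtain ⟨hb1, hb2⟩ := hb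
          rcases mem_union.mp hb1 with hbs | hbO
          · obtain ⟨y, hy, rfl⟩ := mem_image.mp hbs
            by_cases hyv : y = w
            · exfalso
              apply hb2
              rw [hyv, hφv]
              exact mem_insert_self _ _
            · rw [hφs y hyv]
              exact hιB y hy hyv
          · exact hPB (mem_sdiff.mpr ⟨hbO, fun hbA => hb2 (mem_insert_of_mem hbA)⟩)
        · have hfil : S.filter (fun t => w ∈ t) = {s} := by
            ext t
            simp only [mem_filter, mem_singleton]
            constructor
            · rintro ⟨htS, hwt⟩
              by_contra hts
              exact hwv (hf1 t (mem_erase.mpr ⟨hts, htS⟩) w hwt hws)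
            · rintro rfl
              exact ⟨hsS, hws⟩
          have hcol : colSet S φ w = s.image fun y => φ (y, s) := by
            rw [colSet, hfil, singleton_biUnion]
          have hat : atSet S φ w = {ι w} := by
            rw [atSet, hfil, image_singleton, hφs w hwv]
          rw [hcol, hat, ← erase_eq]
          have hmem : ι w ∈ s.image fun y => φ (y, s) :=
            mem_image.mpr ⟨w, hws, hφs w hwv⟩
          rw [card_erase_of_mem hmem]
          have h1 : (s.image fun y => φ (y, s)).card ≤ k := le_trans card_image_le (hsize s hsS)
          omega
      · have hfil : S.filter (fun t => w ∈ t) = S'.filter (fun t => w ∈ t) := by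
          rw [hS', filter_erase, erase_eq_of_notMem]
          intro hmem
          exact hws (mem_filter.mp hmem).2
        have hcol : colSet S φ w = colSet S' φ' w := by
          rw [colSet, hfil, colSet]
          apply biUnion_congr rfl
          intro t ht
          apply image_congr
          intro y _
          exact hφo (y, t) (mem_erase.mp (mem_filter.mp ht).1).1
        have hat : atSet S φ w = atSet S' φ' w := by
          rw [atSet, hfil, atSet]
          apply image_congr
          intro t ht
          exact hφo (w, t) (mem_erase.mp (mem_filter.mp ht).1).1
        rw [hcol, hat]
        exact hI' w

end IncAux

theorem statement_17 {V : Type*} [DecidableEq V] (H : FinHypergraph V)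
    (hlin : H.Linear) (hac : H.IsAlphaAcyclic)
    (Δ k : ℕ) (hΔ : H.maxDegree ≤ Δ) (hk : H.rank ≤ k) :
    H.incChromaticNumber ≤ Δ + k - 1 := by
  have hdegall : ∀ v, IncAux.degS H.edges v ≤ Δ := by
    intro v
    by_cases hv : v ∈ H.verts
    · exact le_trans (Finset.le_sup hv) hΔ
    · have h0 : H.edges.filter (fun s => v ∈ s) = ∅ := by
        apply Finset.filter_eq_empty_iff.mpr
        intro s hs hvs
        exact hv (H.edge_sub s hs hvs)
      simp [IncAux.degS, h0]
  obtain ⟨φ, hb, hp, _⟩ := IncAux.color_aux Δ k H.edges.card H.verts H.edges le_rfl hac hlin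
    H.edge_sub H.edge_nonempty (fun s hs => le_trans (Finset.le_sup hs) hk) hdegall
  have hmem : H.HasIncidenceColoring (Δ + k - 1) :=
    ⟨φ, fun p hp' => hb p hp'.1 hp'.2, fun p q h1 h2 hadj => hp p q h1.1 h1.2 h2.1 h2.2 hadj⟩
  exact Nat.sInf_le hmem
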